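/- arXiv:1804.05330 — 5 statements merged into one kernel-verified Lean document; each statement's English description precedes it below -/
import Mathlib

section
/- Let h : ℕ → ℕ be strictly increasing with h(i) ≥ 1. Then for every n, the tail Σ_{i=n+1}^∞ P_i^(-h(i)) is at most P_{n+1}^(-h(n+1)+1), where P_i is the i-th prime. -/
/-- `P i` is the `i`-th prime number (`P 0 = 2`). -/
noncomputable def P (i : ℕ) : ℕ := Nat.nth Nat.Prime i

lemma P_prime (i : ℕ) : (P i).Prime := Nat.prime_nth_prime i

lemma two_le_P (i : ℕ) : 2 ≤ P i := (P_prime i).two_le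

lemma P_le_P {m n : ℕ} (hmn : m ≤ n) : P m ≤ P n :=
  (Nat.nth_le_nth Nat.infinite_setOf_prime).mpr hmn

/-- The tail `Σ_{i=n+1}^∞ P_i^(-h(i))` is at most `P_{n+1}^(-h(n+1)+1)`. -/
theorem tail_le (h : ℕ → ℕ) (hmono : StrictMono h) (hpos : ∀ i, 1 ≤ h i) (n : ℕ) :
    (∑' i : ℕ, (P (n + 1 + i) : ℝ) ^ (-(h (n + 1 + i) : ℤ))) ≤
      (P (n + 1) : ℝ) ^ (1 - (h (n + 1) : ℤ)) := by
  set p : ℝ := (P (n + 1) : ℝ) with hpdef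
  have hp2 : (2 : ℝ) ≤ p := by rw [hpdef]; exact_mod_cast two_le_P (n + 1)
  have hp1 : (1 : ℝ) ≤ p := by linarith
  have hp0 : (0 : ℝ) < p := by linarith
  set k : ℕ := h (n + 1) with hkdef
  have he : ∀ i : ℕ, k + i ≤ h (n + 1 + i) := by
    intro i
    induction i with
    | zero => simp [hkdef]
    | succ j ih =>
      have := hmono (show n + 1 + j < n + 1 + (j + 1) by omega)
      omega
  have key : ∀ i : ℕ,
      (P (n + 1 + i) : ℝ) ^ (-(h (n + 1 + i) : ℤ)) ≤ p ^ (-(k : ℤ)) * (1 / 2) ^ i := by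
    intro i
    have hb : p ≤ (P (n + 1 + i) : ℝ) := by
      rw [hpdef]; exact_mod_cast P_le_P (Nat.le_add_right (n + 1) i)
    have hb0 : (0 : ℝ) < (P (n + 1 + i) : ℝ) := lt_of_lt_of_le hp0 hb
    rw [zpow_neg, zpow_neg, zpow_natCast, zpow_natCast, one_div, inv_pow, ← mul_inv]
    apply inv_anti₀ (by positivity)
    calc p ^ k * 2 ^ i ≤ p ^ k * p ^ i := by
          apply mul_le_mul_of_nonneg_left (pow_le_pow_left₀ (by norm_num) hp2 i)
            (by positivity)
      _ = p ^ (k + i) := (pow_add p k i).symm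
      _ ≤ (P (n + 1 + i) : ℝ) ^ (k + i) :=
          pow_le_pow_left₀ (le_of_lt hp0) hb _
      _ ≤ (P (n + 1 + i) : ℝ) ^ (h (n + 1 + i)) :=
          pow_le_pow_right₀ (by linarith) (he i)
  have hsumR : Summable (fun i : ℕ => p ^ (-(k : ℤ)) * (1 / 2 : ℝ) ^ i) :=
    (summable_geometric_of_lt_one (by norm_num) (by norm_num)).mul_left _
  have hsumL : Summable (fun i : ℕ => (P (n + 1 + i) : ℝ) ^ (-(h (n + 1 + i) : ℤ))) := by
    apply Summable.of_nonneg_of_le (fun i => ?_) key hsumR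
    positivity
  calc (∑' i : ℕ, (P (n + 1 + i) : ℝ) ^ (-(h (n + 1 + i) : ℤ)))
      ≤ ∑' i : ℕ, p ^ (-(k : ℤ)) * (1 / 2 : ℝ) ^ i := Summable.tsum_le_tsum key hsumL hsumR
    _ = p ^ (-(k : ℤ)) * (1 - 1 / 2)⁻¹ := by
        rw [tsum_mul_left, tsum_geometric_of_lt_one (by norm_num) (by norm_num)]
    _ = 2 * p ^ (-(k : ℤ)) := by ring
    _ ≤ p * p ^ (-(k : ℤ)) := by
        have := zpow_pos hp0 (-(k : ℤ))
        nlinarith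
    _ = p ^ (1 - (k : ℤ)) := by
        rw [sub_eq_add_neg, zpow_add₀ (ne_of_gt hp0), zpow_one]
end

section
/- Let h : ℕ → ℕ be strictly increasing with h(i) ≥ 1. For every j, the rational number α_j = Σ_{i=0}^j P_i^(-h(i)), written in lowest terms as m/d, has denominator d = Π_{i=0}^j P_i^(h(i)); in particular the numerator m is coprime to P_i for every i ≤ j. -/
lemma P_inj : Function.Injective P :=
  Nat.nth_injective Nat.infinite_setOf_prime

lemma add_den_of_coprime (q r : ℚ) (hc : Nat.Coprime q.den r.den) :
    (q + r).den = q.den * r.den := by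
  have hq : (q.den : ℤ) ≠ 0 := Int.natCast_ne_zero.2 q.den_ne_zero
  have hr : (r.den : ℤ) ≠ 0 := Int.natCast_ne_zero.2 r.den_ne_zero
  have key : q + r = ((q.num * r.den + r.num * q.den : ℤ) : ℚ) / ((q.den * r.den : ℤ) : ℚ) := by
    rw [← Rat.divInt_eq_div]
    conv_lhs => rw [← Rat.num_divInt_den q, ← Rat.num_divInt_den r,
      Rat.divInt_add_divInt _ _ hq hr]
  have hpos : (0 : ℤ) < (q.den * r.den : ℤ) := by positivity
  -- IsCoprime facts in ℤ
  have cq : IsCoprime q.num (q.den : ℤ) :=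
    Int.isCoprime_iff_gcd_eq_one.2 (by simpa [Int.gcd] using q.reduced)
  have cr : IsCoprime r.num (r.den : ℤ) :=
    Int.isCoprime_iff_gcd_eq_one.2 (by simpa [Int.gcd] using r.reduced)
  have cqr : IsCoprime (q.den : ℤ) (r.den : ℤ) :=
    Int.isCoprime_iff_gcd_eq_one.2 (by simpa [Int.gcd] using hc)
  have h1 : IsCoprime (q.num * r.den + r.num * q.den) (q.den : ℤ) := by
    have : IsCoprime (q.num * (r.den : ℤ)) (q.den : ℤ) := (cq.mul_left cqr.symm)
    simpa [mul_comm] using this.add_mul_left_left r.num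
  have h2 : IsCoprime (q.num * r.den + r.num * q.den) (r.den : ℤ) := by
    have : IsCoprime (r.num * (q.den : ℤ)) (r.den : ℤ) := (cr.mul_left cqr)
    simpa [add_comm, mul_comm] using this.add_mul_left_left q.num
  have hcop : Nat.Coprime (q.num * r.den + r.num * q.den).natAbs
      ((q.den * r.den : ℤ)).natAbs := by
    have := Int.isCoprime_iff_gcd_eq_one.1 (h1.mul_right h2)
    simpa [Int.gcd, Int.natAbs_mul] using this
  have := Rat.den_div_eq_of_coprime hpos hcop
  rw [← key] at this
  exact_mod_cast this

lemma inv_pow_den (p n : ℕ) (hp : 0 < p) :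
    ((p : ℚ) ^ (-(n : ℤ))).den = p ^ n := by
  have h : ((p : ℚ) ^ (-(n : ℤ))) = ((1 : ℤ) : ℚ) / ((p ^ n : ℤ) : ℚ) := by
    push_cast
    rw [zpow_neg, zpow_natCast, one_div]
  have hpos : (0 : ℤ) < (p : ℤ) ^ n := by positivity
  have hcop : Nat.Coprime ((1 : ℤ)).natAbs (((p : ℤ) ^ n)).natAbs :=
    Nat.coprime_one_left _
  have := Rat.den_div_eq_of_coprime hpos hcop
  rw [show (((p : ℤ) ^ n : ℤ) : ℚ) = ((p ^ n : ℤ) : ℚ) by push_cast; ring] at this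
  rw [← h] at this
  exact_mod_cast this

/-- In lowest terms, the denominator of `α_j = Σ_{i=0}^j P_i^(-h(i))` is
`Π_{i=0}^j P_i^(h(i))`; in particular the numerator is coprime to each `P i`, `i ≤ j`. -/
theorem alpha_j_den (h : ℕ → ℕ) (hmono : StrictMono h) (hpos : ∀ i, 1 ≤ h i) (j : ℕ) :
    (∑ i ∈ Finset.range (j + 1), (P i : ℚ) ^ (-(h i : ℤ))).den =
        ∏ i ∈ Finset.range (j + 1), P i ^ h i ∧
      ∀ i ≤ j, ¬ (P i : ℤ) ∣ (∑ i ∈ Finset.range (j + 1), (P i : ℚ) ^ (-(h i : ℤ))).num := by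
  have hden : ∀ j : ℕ, (∑ i ∈ Finset.range (j + 1), (P i : ℚ) ^ (-(h i : ℤ))).den =
      ∏ i ∈ Finset.range (j + 1), P i ^ h i := by
    intro j
    induction j with
    | zero => simpa using inv_pow_den (P 0) (h 0) (P_prime 0).pos
    | succ k ih =>
        rw [Finset.sum_range_succ, Finset.prod_range_succ]
        have hcop : Nat.Coprime (∑ i ∈ Finset.range (k + 1), (P i : ℚ) ^ (-(h i : ℤ))).den
            ((P (k+1) : ℚ) ^ (-(h (k+1) : ℤ))).den := by
          rw [ih, inv_pow_den _ _ (P_prime (k+1)).pos]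
          apply Nat.Coprime.prod_left
          intro i hi
          apply Nat.Coprime.pow
          rw [Nat.coprime_primes (P_prime i) (P_prime (k+1))]
          intro he
          have h1 := P_inj he
          have h2 := Finset.mem_range.1 hi
          omega
        rw [add_den_of_coprime _ _ hcop, ih, inv_pow_den _ _ (P_prime (k+1)).pos]
  refine ⟨hden j, fun i hij hdvd => ?_⟩
  set q := ∑ i ∈ Finset.range (j + 1), (P i : ℚ) ^ (-(h i : ℤ))
  have hdd : P i ∣ q.den := by
    rw [hden j]
    exact dvd_trans (dvd_pow_self (P i) (by have := hpos i; omega))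
      (Finset.dvd_prod_of_mem _ (Finset.mem_range.2 (by omega)))
  have hn : P i ∣ q.num.natAbs := by
    have := Int.natAbs_dvd_natAbs.mpr hdvd
    simpa using this
  exact (P_prime i).ne_one
    (((q.reduced.coprime_dvd_left hn)).eq_one_of_dvd hdd)
end

section
/- For every rational number q = c/d in lowest terms with 0 < q < 1 and d not a power of the base b times a unit, if the base-b expansion of q is eventually periodic with pre-period s and period length t−s, then t < d. More precisely: writing d = d₁·d₂ with d₁ coprime to b and d₂ dividing some power of b, the pre-period s is the least natural number with d₂ | b^s, the period length is the multiplicative order of b modulo d₁, and s plus the period length is less than d. -/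
/-- If every prime factor of `n` divides `b`, then `n ∣ b ^ n`. -/
lemma dvd_pow_of_prime_dvd (b : ℕ) : ∀ n : ℕ, 0 < n →
    (∀ p : ℕ, p.Prime → p ∣ n → p ∣ b) → n ∣ b ^ n := by
  intro n
  induction n using Nat.strong_induction_on with
  | _ n ih =>
    intro hn hp
    rcases eq_or_ne n 1 with rfl | hne
    · simpa using one_dvd _
    · obtain ⟨p, hpp, hpn⟩ := Nat.exists_prime_and_dvd hne
      obtain ⟨m, rfl⟩ := hpn
      have hm0 : 0 < m := Nat.pos_of_ne_zero (fun h => by simp [h] at hn)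
      have hp2 : 2 ≤ p := hpp.two_le
      have hmlt : m < p * m := by nlinarith
      have hm : m ∣ b ^ m :=
        ih m hmlt hm0 (fun q hq hqm => hp q hq (hqm.mul_left p))
      have hpb : p ∣ b := hp p hpp ⟨m, rfl⟩
      have h1 : p * m ∣ b * b ^ (p * m - 1) := by
        refine mul_dvd_mul hpb (hm.trans (pow_dvd_pow b ?_))
        omega
      have h2 : b * b ^ (p * m - 1) = b ^ (p * m) := by
        rw [← pow_succ']
        congr 1
        omega
      rwa [h2] at h1

/-- Periodicity structure of the base-`b` expansion of a rational `c/d` in lowest terms,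
`0 < c/d < 1`, where `d` is not (a unit times) a divisor of a power of `b`.
Write `d = d₁ * d₂` with `d₁` the largest divisor of `d` coprime to `b` (so every prime
factor of `d₂` divides `b`). Let `s` be the least natural number with `d₂ ∣ b^s` and let
the period length be the multiplicative order of `b` modulo `d₁`. Then the base-`b`
expansion `D` of `c/d` is periodic with pre-period `s` and that period length,
and `s` plus the period length is less than `d`. -/
theorem base_expansion_period
    (b : ℕ) (hb : 2 ≤ b) (c d : ℕ) (hc : 0 < c) (hcd : c < d)
    (hcop : Nat.Coprime c d)
    (d₁ d₂ : ℕ) (hd : d = d₁ * d₂)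
    (hd₁b : Nat.Coprime b d₁) (hd₁ne : d₁ ≠ 1)
    (hd₂ : ∀ p : ℕ, p.Prime → p ∣ d₂ → p ∣ b)
    (s : ℕ) (hs : d₂ ∣ b ^ s) (hsleast : ∀ s' < s, ¬ d₂ ∣ b ^ s')
    (D : ℕ → ℕ) (hDdigit : ∀ i, D i < b)
    (hD : ∀ n : ℕ, 1 ≤ n →
      (∑ i ∈ Finset.Icc 1 n, (D i : ℚ) * (b : ℚ) ^ (-(i : ℤ))) ≤ (c : ℚ) / d ∧
      ((c : ℚ) / d) <
        (∑ i ∈ Finset.Icc 1 n, (D i : ℚ) * (b : ℚ) ^ (-(i : ℤ))) + (b : ℚ) ^ (-(n : ℤ))) :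
    (∀ i, s < i → D (i + orderOf (ZMod.unitOfCoprime b hd₁b)) = D i) ∧
      s + orderOf (ZMod.unitOfCoprime b hd₁b) < d := by
  have hd0 : 0 < d := lt_trans hc hcd
  have hd₁0 : d₁ ≠ 0 := by
    intro h; rw [h, zero_mul] at hd; omega
  have hd₂0 : 0 < d₂ := by
    rcases Nat.eq_zero_or_pos d₂ with h | h
    · rw [h, mul_zero] at hd; omega
    · exact h
  have hd₁1 : 1 < d₁ := by omega
  haveI : NeZero d₁ := ⟨hd₁0⟩
  set t := orderOf (ZMod.unitOfCoprime b hd₁b) with ht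
  have hb0 : (0 : ℚ) < (b : ℚ) := by exact_mod_cast (by omega : 0 < b)
  have hdq : (0 : ℚ) < (d : ℚ) := by exact_mod_cast hd0
  -- Step 1: partial sums are floors
  have hA : ∀ n : ℕ, 1 ≤ n →
      (∑ i ∈ Finset.Icc 1 n, D i * b ^ (n - i)) = c * b ^ n / d := by
    intro n hn
    obtain ⟨h1, h2⟩ := hD n hn
    set S : ℚ := ∑ i ∈ Finset.Icc 1 n, (D i : ℚ) * (b : ℚ) ^ (-(i : ℤ)) with hS
    set A : ℕ := ∑ i ∈ Finset.Icc 1 n, D i * b ^ (n - i) with hAdef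
    set P : ℚ := (b : ℚ) ^ n with hP
    have hP0 : 0 < P := pow_pos hb0 n
    have key : (A : ℚ) = P * S := by
      rw [hAdef, hS, Finset.mul_sum]
      push_cast
      refine Finset.sum_congr rfl fun i hi => ?_
      have hi' : i ≤ n := (Finset.mem_Icc.mp hi).2
      have hz : (b : ℚ) ^ (n - i) = P * (b : ℚ) ^ (-(i : ℤ)) := by
        rw [hP, ← zpow_natCast (b : ℚ) n, ← zpow_natCast (b : ℚ) (n - i),
          ← zpow_add₀ (ne_of_gt hb0)]
        congr 1
        omega
      rw [hz]; ring
    have hinv : (b : ℚ) ^ (-(n : ℤ)) = P⁻¹ := by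
      rw [hP, zpow_neg, zpow_natCast]
    have e1 : A * d ≤ c * b ^ n := by
      have h1' : S * d ≤ (c : ℚ) := (le_div_iff₀ hdq).mp h1
      have : (A : ℚ) * d ≤ (c : ℚ) * P := by
        rw [key]
        nlinarith
      rw [hP] at this
      exact_mod_cast this
    have e2 : c * b ^ n < (A + 1) * d := by
      have h2' : (c : ℚ) < (S + P⁻¹) * d := (div_lt_iff₀ hdq).mp (by rw [← hinv]; exact h2)
      have hPinv : P⁻¹ * P = 1 := inv_mul_cancel₀ (ne_of_gt hP0)
      have : (c : ℚ) * P < ((A : ℚ) + 1) * d := by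
        have := mul_lt_mul_of_pos_right h2' hP0
        calc (c : ℚ) * P < ((S + P⁻¹) * d) * P := this
          _ = ((A : ℚ) + 1) * d := by rw [key]; linear_combination (d : ℚ) * hPinv
      rw [hP] at this
      exact_mod_cast this
    exact (Nat.div_eq_of_lt_le e1 e2).symm
  -- Step 2: recursion for partial sums
  have hstep : ∀ n : ℕ, 1 ≤ n →
      c * b ^ n / d = b * (c * b ^ (n - 1) / d) + D n := by
    intro n hn
    obtain ⟨m, rfl⟩ : ∃ m, n = m + 1 := ⟨n - 1, by omega⟩
    rw [← hA (m + 1) (by omega)]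
    simp only [Nat.add_sub_cancel]
    rcases Nat.eq_zero_or_pos m with rfl | hm
    · rw [show (0:ℕ) + 1 = 1 from rfl]
      rw [Finset.Icc_self, Finset.sum_singleton]
      have : c * b ^ 0 / d = 0 := Nat.div_eq_of_lt (by simpa using hcd)
      rw [this]
      simp
    · rw [Finset.sum_Icc_succ_top (by omega : 1 ≤ m + 1)]
      rw [← hA m hm]
      have hsum : ∑ i ∈ Finset.Icc 1 m, D i * b ^ (m + 1 - i)
          = b * ∑ i ∈ Finset.Icc 1 m, D i * b ^ (m - i) := by
        rw [Finset.mul_sum]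
        refine Finset.sum_congr rfl fun i hi => ?_
        have hi' : i ≤ m := (Finset.mem_Icc.mp hi).2
        rw [show m + 1 - i = (m - i) + 1 by omega, pow_succ]
        ring
      rw [hsum]
      simp
  -- Step 3: digit formula in terms of remainders
  have hDform : ∀ n : ℕ, 1 ≤ n → D n = b * (c * b ^ (n - 1) % d) / d := by
    intro n hn
    have h := hstep n hn
    obtain ⟨m, rfl⟩ : ∃ m, n = m + 1 := ⟨n - 1, by omega⟩
    simp only [Nat.add_sub_cancel] at h ⊢
    have hdiv : c * b ^ (m + 1) = d * (b * (c * b ^ m / d)) + b * (c * b ^ m % d) := by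
      have := Nat.div_add_mod (c * b ^ m) d
      calc c * b ^ (m + 1) = b * (c * b ^ m) := by ring
        _ = b * (d * (c * b ^ m / d) + c * b ^ m % d) := by rw [this]
        _ = d * (b * (c * b ^ m / d)) + b * (c * b ^ m % d) := by ring
    have e : c * b ^ (m + 1) / d
        = b * (c * b ^ m / d) + b * (c * b ^ m % d) / d := by
      rw [hdiv, Nat.mul_add_div hd0]
    rw [e] at h
    omega
  -- Step 4: order of b mod d₁
  have hmodt : b ^ t ≡ 1 [MOD d₁] := by
    have hu : ((ZMod.unitOfCoprime b hd₁b : (ZMod d₁)ˣ) : ZMod d₁) ^ t = 1 := by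
      rw [← Units.val_pow_eq_pow_val, pow_orderOf_eq_one, Units.val_one]
    have hcast : ((b ^ t : ℕ) : ZMod d₁) = ((1 : ℕ) : ZMod d₁) := by
      push_cast
      rw [← ZMod.coe_unitOfCoprime b hd₁b]
      exact hu
    exact (ZMod.natCast_eq_natCast_iff _ _ _).mp hcast
  have ht0 : 0 < t := orderOf_pos _
  -- Step 5: periodicity of remainders
  have hc12 : Nat.Coprime d₁ d₂ :=
    Nat.Coprime.coprime_dvd_right hs (hd₁b.symm.pow_right s)
  have hmod : ∀ i : ℕ, s ≤ i → c * b ^ (i + t) % d = c * b ^ i % d := by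
    intro i hi
    have h1 : c * b ^ (i + t) ≡ c * b ^ i [MOD d₁] := by
      have := (hmodt.mul_left (c * b ^ i))
      rw [mul_one] at this
      calc c * b ^ (i + t) = c * b ^ i * b ^ t := by rw [pow_add]; ring
        _ ≡ c * b ^ i [MOD d₁] := this
    have hdvd1 : d₂ ∣ c * b ^ (i + t) :=
      Dvd.dvd.mul_left (hs.trans (pow_dvd_pow b (by omega))) c
    have hdvd2 : d₂ ∣ c * b ^ i :=
      Dvd.dvd.mul_left (hs.trans (pow_dvd_pow b hi)) c
    have h2 : c * b ^ (i + t) ≡ c * b ^ i [MOD d₂] :=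
      ((Nat.modEq_zero_iff_dvd).mpr hdvd1).trans
        ((Nat.modEq_zero_iff_dvd).mpr hdvd2).symm
    have := (Nat.modEq_and_modEq_iff_modEq_mul hc12).mp ⟨h1, h2⟩
    rw [← hd] at this
    exact this
  constructor
  · -- periodicity of digits
    intro i hi
    have h1 : D (i + t) = b * (c * b ^ (i + t - 1) % d) / d := hDform (i + t) (by omega)
    have h2 : D i = b * (c * b ^ (i - 1) % d) / d := hDform i (by omega)
    rw [h1, h2, show i + t - 1 = (i - 1) + t by omega, hmod (i - 1) (by omega)]
  · -- s + t < d
    have htcard : t ∣ Fintype.card (ZMod d₁)ˣ := orderOf_dvd_card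
    have hcardtot : Fintype.card (ZMod d₁)ˣ = Nat.totient d₁ :=
      ZMod.card_units_eq_totient d₁
    have httot : t ≤ Nat.totient d₁ :=
      Nat.le_of_dvd (Nat.totient_pos.mpr (by omega)) (hcardtot ▸ htcard)
    have htlt : t < d₁ := lt_of_le_of_lt httot (Nat.totient_lt d₁ hd₁1)
    have hsd₂ : s ≤ d₂ := by
      by_contra h
      exact hsleast d₂ (by omega) (dvd_pow_of_prime_dvd b d₂ hd₂0 hd₂)
    rcases eq_or_ne d₂ 1 with h1 | h1
    · have hs0 : s = 0 := by
        by_contra h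
        exact hsleast 0 (by omega) (by simp [h1])
      rw [hs0, zero_add]
      calc t < d₁ := htlt
        _ ≤ d₁ * d₂ := Nat.le_mul_of_pos_right d₁ hd₂0
        _ = d := hd.symm
    · have h2le : 2 ≤ d₂ := by omega
      have hmul : d₂ + d₁ ≤ d₂ * d₁ := Nat.add_le_mul h2le (by omega)
      calc s + t < d₂ + d₁ := by omega
        _ ≤ d₂ * d₁ := hmul
        _ = d := by rw [hd, mul_comm]
end

section
/- Let α be a real number whose infinite sum of base-b digit terms is α = Σ_{i=1}^∞ D_i b^(-k_i) with digits D_i ∈ {1,...,b−1} and strictly increasing exponents k_i ≥ 1. If for fixed n and base b = Π_{i=0}^n P_i we set α = Σ_{i=0}^∞ P_i^(-h(i)) with h strictly increasing, h(i) ≥ 1, then every term D_j b^(-k_j) with k_j > h(n) satisfies D_j b^(-k_j) ≤ P_{n+1}^(-h(n+1)+1). -/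
section GeometricTail

variable {p : ℕ → ℝ} {h : ℕ → ℕ} {N : ℕ}

lemma zpow_neg_nat_add_le (hp : Monotone p) (hp2 : 2 ≤ p N) (hh : StrictMono h) (i : ℕ) :
    p (i + N) ^ (-(h (i + N) : ℤ)) ≤ p N ^ (-(h N : ℤ)) * (p N)⁻¹ ^ i := by
  have hpN : 0 < p N := by linarith
  have hpiN : p N ≤ p (i + N) := hp (Nat.le_add_left N i)
  calc p (i + N) ^ (-(h (i + N) : ℤ)) = (p (i + N))⁻¹ ^ h (i + N) := by
        rw [zpow_neg, zpow_natCast, inv_pow]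
    _ ≤ (p N)⁻¹ ^ h (i + N) :=
        pow_le_pow_left₀ (inv_nonneg.2 (by linarith)) (inv_anti₀ hpN hpiN) _
    _ ≤ (p N)⁻¹ ^ (i + h N) :=
        pow_le_pow_of_le_one (inv_nonneg.2 hpN.le) (inv_le_one_of_one_le₀ (by linarith))
          (hh.add_le_nat i N)
    _ = p N ^ (-(h N : ℤ)) * (p N)⁻¹ ^ i := by
        rw [pow_add, zpow_neg, zpow_natCast, ← inv_pow, mul_comm]

lemma summable_geometric_inv (hp2 : 2 ≤ p N) : Summable fun i : ℕ => (p N)⁻¹ ^ i :=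
  summable_geometric_of_lt_one (inv_nonneg.2 (by linarith))
    (inv_lt_one_of_one_lt₀ (by linarith))

lemma summable_zpow_neg_nat_add (hp : Monotone p) (hp2 : 2 ≤ p N) (hh : StrictMono h) :
    Summable fun i => p (i + N) ^ (-(h (i + N) : ℤ)) :=
  .of_nonneg_of_le
    (fun i => zpow_nonneg (by linarith [hp (Nat.le_add_left N i)]) _)
    (zpow_neg_nat_add_le hp hp2 hh) ((summable_geometric_inv hp2).mul_left _)

lemma tsum_zpow_neg_nat_add_le (hp : Monotone p) (hp2 : 2 ≤ p N) (hh : StrictMono h) :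
    ∑' i, p (i + N) ^ (-(h (i + N) : ℤ)) ≤ p N ^ (1 - (h N : ℤ)) := by
  have hpN : 0 < p N := by linarith
  have hratio : (1 - (p N)⁻¹)⁻¹ ≤ p N := by
    have : (2 : ℝ)⁻¹ ≤ 1 - (p N)⁻¹ := by
      have := inv_anti₀ two_pos hp2
      linarith
    exact (inv_anti₀ (by norm_num) this).trans (by rw [inv_inv]; exact hp2)
  calc ∑' i, p (i + N) ^ (-(h (i + N) : ℤ))
      ≤ ∑' i : ℕ, p N ^ (-(h N : ℤ)) * (p N)⁻¹ ^ i :=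
        (summable_zpow_neg_nat_add hp hp2 hh).tsum_le_tsum (zpow_neg_nat_add_le hp hp2 hh)
          ((summable_geometric_inv hp2).mul_left _)
    _ = p N ^ (-(h N : ℤ)) * (1 - (p N)⁻¹)⁻¹ := by
        rw [tsum_mul_left, tsum_geometric_of_lt_one (inv_nonneg.2 hpN.le)
          (inv_lt_one_of_one_lt₀ (by linarith))]
    _ ≤ p N ^ (-(h N : ℤ)) * p N := mul_le_mul_of_nonneg_left hratio (zpow_nonneg hpN.le _)
    _ = p N ^ (1 - (h N : ℤ)) := by rw [sub_eq_neg_add, zpow_add₀ hpN.ne', zpow_one]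

end GeometricTail

lemma exists_nat_sum_mul_zpow_neg_mul_eq {ι : Type*} (s : Finset ι) (a q e : ι → ℕ) {B : ℕ}
    (hq : ∀ i ∈ s, q i ≠ 0) (hdvd : ∀ i ∈ s, q i ^ e i ∣ B) :
    ∃ K : ℕ, (∑ i ∈ s, (a i : ℝ) * (q i : ℝ) ^ (-(e i : ℤ))) * B = K := by
  refine ⟨∑ i ∈ s, a i * (B / q i ^ e i), ?_⟩
  rw [Finset.sum_mul]
  push_cast
  refine Finset.sum_congr rfl fun i hi => ?_
  have hqi : (q i : ℝ) ≠ 0 := Nat.cast_ne_zero.2 (hq i hi)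
  rw [Nat.cast_div (hdvd i hi) (by simpa using pow_ne_zero _ hqi), zpow_neg, zpow_natCast]
  push_cast
  field_simp

lemma le_of_le_of_lt_add_inv_of_mul_eq_natCast {x s a c : ℝ} {K M : ℕ} (hc : 0 < c)
    (hK : x * c = K) (hM : s * c = M) (hxa : x ≤ a) (has : a < s + c⁻¹) : x ≤ s := by
  have hlt : (K : ℝ) < M + 1 := by
    rw [← hK, ← hM]
    calc x * c ≤ a * c := mul_le_mul_of_nonneg_right hxa hc.le
      _ < (s + c⁻¹) * c := mul_lt_mul_of_pos_right has hc
      _ = s * c + 1 := by rw [add_mul, inv_mul_cancel₀ hc.ne']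
  have hKM : K ≤ M := Nat.le_of_lt_succ (by exact_mod_cast hlt)
  exact le_of_mul_le_mul_right (by rw [hK, hM]; exact_mod_cast hKM) hc

lemma le_sum_Icc_digits_of_le {b m K : ℕ} (hb : 0 < b) (E : ℕ → ℕ) {x α : ℝ}
    (hK : x * (b : ℝ) ^ m = K) (hxα : x ≤ α)
    (hα : α < (∑ i ∈ Finset.Icc 1 m, (E i : ℝ) * (b : ℝ) ^ (-(i : ℤ))) + (b : ℝ) ^ (-(m : ℤ))) :
    x ≤ ∑ i ∈ Finset.Icc 1 m, (E i : ℝ) * (b : ℝ) ^ (-(i : ℤ)) := by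
  obtain ⟨M, hM⟩ := exists_nat_sum_mul_zpow_neg_mul_eq (Finset.Icc 1 m) E (fun _ => b) id
    (B := b ^ m) (fun _ _ => hb.ne') fun i hi => pow_dvd_pow b (Finset.mem_Icc.1 hi).2
  exact le_of_le_of_lt_add_inv_of_mul_eq_natCast (pow_pos (Nat.cast_pos.2 hb) m) hK
    (by simpa using hM) hxα (by simpa using hα)

theorem term_beyond_hn_le_general
    (h : ℕ → ℕ) (hmono : StrictMono h) (hpos : ∀ i, 1 ≤ h i)
    (n : ℕ) (b : ℕ) (hbdef : b = ∏ i ∈ Finset.range (n + 1), P i)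
    (α : ℝ) (hα : α = ∑' i : ℕ, (P i : ℝ) ^ (-(h i : ℤ)))
    (E : ℕ → ℕ)
    (hE : ∀ m : ℕ, 1 ≤ m →
      (∑ i ∈ Finset.Icc 1 m, (E i : ℝ) * (b : ℝ) ^ (-(i : ℤ))) ≤ α ∧
        α < (∑ i ∈ Finset.Icc 1 m, (E i : ℝ) * (b : ℝ) ^ (-(i : ℤ))) + (b : ℝ) ^ (-(m : ℤ))) :
    ∀ k : ℕ, h n < k →
      (E k : ℝ) * (b : ℝ) ^ (-(k : ℤ)) ≤ (P (n + 1) : ℝ) ^ (1 - (h (n + 1) : ℤ)) := by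
  intro k hk
  obtain ⟨m, rfl⟩ : ∃ m, k = m + 1 := ⟨k - 1, by omega⟩
  have hm : 1 ≤ m := (hpos n).trans (by omega)
  have hb : 0 < b := by
    rw [hbdef]
    exact Finset.prod_pos fun i _ => (Nat.prime_nth_prime i).pos
  have hPmono : Monotone fun i => (P i : ℝ) := fun i j hij =>
    Nat.cast_le.2 (Nat.nth_monotone Nat.infinite_setOfPred_prime hij)
  have hP2 : 2 ≤ (P (n + 1) : ℝ) := by exact_mod_cast (Nat.prime_nth_prime (n + 1)).two_le
  have hsummable : Summable fun i => (P i : ℝ) ^ (-(h i : ℤ)) := by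
    have htail := summable_zpow_neg_nat_add hPmono hP2 hmono
    exact (summable_nat_add_iff (n + 1)).1 htail
  have hsplit := hsummable.sum_add_tsum_nat_add (n + 1)
  rw [← hα] at hsplit
  have htail_nonneg : 0 ≤ ∑' i, (P (i + (n + 1)) : ℝ) ^ (-(h (i + (n + 1)) : ℤ)) :=
    tsum_nonneg fun i => zpow_nonneg (Nat.cast_nonneg _) _
  have hhead_le : ∑ i ∈ Finset.range (n + 1), (P i : ℝ) ^ (-(h i : ℤ)) ≤
      ∑ i ∈ Finset.Icc 1 m, (E i : ℝ) * (b : ℝ) ^ (-(i : ℤ)) := by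
    obtain ⟨K, hK⟩ := exists_nat_sum_mul_zpow_neg_mul_eq (Finset.range (n + 1)) 1 P h
      (B := b ^ m) (fun i _ => (Nat.prime_nth_prime i).ne_zero) fun i hi =>
        (pow_dvd_pow_of_dvd (hbdef ▸ Finset.dvd_prod_of_mem P hi : P i ∣ b) _).trans
          (pow_dvd_pow b ((hmono.monotone (Finset.mem_range_succ_iff.1 hi)).trans (by omega)))
    exact le_sum_Icc_digits_of_le hb E (by simpa using hK) (by linarith) (hE m hm).2
  have hnext := (hE (m + 1) (by omega)).1
  rw [Finset.sum_Icc_succ_top (by omega)] at hnext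
  calc (E (m + 1) : ℝ) * (b : ℝ) ^ (-((m + 1 : ℕ) : ℤ))
      ≤ ∑' i, (P (i + (n + 1)) : ℝ) ^ (-(h (i + (n + 1)) : ℤ)) := by linarith
    _ ≤ (P (n + 1) : ℝ) ^ (1 - (h (n + 1) : ℤ)) := tsum_zpow_neg_nat_add_le hPmono hP2 hmono

/-- Let `α = Σ_{i=0}^∞ P_i^(-h(i))`, fix `n` and let `b = Π_{i=0}^n P_i`. If `E` is the
base-`b` expansion of `α`, then every nonzero term `E k · b^(-k)` at a position
`k > h n` is at most `P_{n+1}^(-h(n+1)+1)` (the tail beyond the length-`h n` expansion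
of `α_n` is at most that bound). -/
theorem term_beyond_hn_le
    (h : ℕ → ℕ) (hmono : StrictMono h) (hpos : ∀ i, 1 ≤ h i)
    (n : ℕ) (b : ℕ) (hbdef : b = ∏ i ∈ Finset.range (n + 1), P i)
    (α : ℝ) (hα : α = ∑' i : ℕ, (P i : ℝ) ^ (-(h i : ℤ)))
    (E : ℕ → ℕ) (hEdigit : ∀ i, E i < b)
    (hE : ∀ m : ℕ, 1 ≤ m →
      (∑ i ∈ Finset.Icc 1 m, (E i : ℝ) * (b : ℝ) ^ (-(i : ℤ))) ≤ α ∧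
        α < (∑ i ∈ Finset.Icc 1 m, (E i : ℝ) * (b : ℝ) ^ (-(i : ℤ))) + (b : ℝ) ^ (-(m : ℤ))) :
    ∀ k : ℕ, h n < k →
      (E k : ℝ) * (b : ℝ) ^ (-(k : ℤ)) ≤ (P (n + 1) : ℝ) ^ (1 - (h (n + 1) : ℤ)) :=
  term_beyond_hn_le_general h hmono hpos n b hbdef α hα E hE
end

section
/- Let h be strictly increasing with h(i) ≥ 1 and growth condition P_n^(2(n+2)(h(n)+1)^3) < h(n+1), and let α = Σ_{i=0}^∞ P_i^(-h(i)). Then α is a Liouville number: for every positive integer m there exist integers p, q with q > 1 such that 0 < |α − p/q| < 1/q^m. -/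
open Finset

section HalvingSeries

variable {f : ℕ → ℝ}

lemma le_mul_half_pow_of_le_half (hf : ∀ i, f (i + 1) ≤ f i / 2) (k i : ℕ) :
    f (k + i) ≤ f k * (1 / 2) ^ i := by
  induction i with
  | zero => simp
  | succ i ih =>
    calc f (k + (i + 1)) ≤ f (k + i) / 2 := hf (k + i)
      _ ≤ f k * (1 / 2) ^ i / 2 := by gcongr
      _ = f k * (1 / 2) ^ (i + 1) := by ring

lemma summable_of_le_half (h0 : ∀ i, 0 ≤ f i) (hf : ∀ i, f (i + 1) ≤ f i / 2) : Summable f :=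
  (summable_geometric_two.mul_left (f 0)).of_nonneg_of_le h0 fun i => by
    simpa using le_mul_half_pow_of_le_half hf 0 i

lemma tsum_nat_add_le_two_mul_of_le_half (h0 : ∀ i, 0 ≤ f i) (hf : ∀ i, f (i + 1) ≤ f i / 2)
    (k : ℕ) : ∑' i, f (i + k) ≤ 2 * f k :=
  calc ∑' i, f (i + k) ≤ ∑' i, f k * (1 / 2) ^ i :=
        Summable.tsum_le_tsum (fun i => add_comm i k ▸ le_mul_half_pow_of_le_half hf k i)
          ((summable_nat_add_iff k).2 (summable_of_le_half h0 hf))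
          (summable_geometric_two.mul_left _)
    _ = 2 * f k := by rw [tsum_mul_left, tsum_geometric_two, mul_comm]

end HalvingSeries

lemma exists_sum_range_inv_eq_div_prod (d : ℕ → ℕ) (hd : ∀ i, 0 < d i) (N : ℕ) :
    ∃ A : ℕ, ∑ i ∈ range N, (d i : ℝ)⁻¹ = A / ∏ i ∈ range N, d i := by
  induction N with
  | zero => exact ⟨0, by simp⟩
  | succ N ih =>
    obtain ⟨A, hA⟩ := ih
    refine ⟨A * d N + ∏ i ∈ range N, d i, ?_⟩
    have hdN : (d N : ℝ) ≠ 0 := by exact_mod_cast (hd N).ne'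
    have hprod : ((∏ i ∈ range N, d i : ℕ) : ℝ) ≠ 0 := by
      exact_mod_cast (prod_pos fun i _ => hd i).ne'
    rw [sum_range_succ, prod_range_succ, hA]
    push_cast at hprod ⊢
    field_simp

theorem liouville_tsum_inv_of_two_mul_le (d : ℕ → ℕ) (hpos : ∀ i, 0 < d i)
    (hd : ∀ i, 2 * d i ≤ d (i + 1))
    (happrox : ∀ m, ∃ N, 1 < ∏ i ∈ range N, d i ∧ 2 * (∏ i ∈ range N, d i) ^ m < d N) :
    Liouville (∑' i, (d i : ℝ)⁻¹) := by
  set f : ℕ → ℝ := fun i => (d i : ℝ)⁻¹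
  have h0 : ∀ i, 0 ≤ f i := fun i => by positivity
  have hhalf : ∀ i, f (i + 1) ≤ f i / 2 := fun i => by
    have : (0 : ℝ) < d i := by exact_mod_cast hpos i
    rw [div_eq_mul_inv, ← mul_inv, mul_comm]
    exact inv_anti₀ (by positivity) (by exact_mod_cast hd i)
  have hsum : Summable f := summable_of_le_half h0 hhalf
  intro m
  obtain ⟨N, hq, hN⟩ := happrox m
  obtain ⟨A, hA⟩ := exists_sum_range_inv_eq_div_prod d hpos N
  set q := ∏ i ∈ range N, d i
  have htail : ∑' i, f i - A / q = ∑' i, f (i + N) := by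
    rw [← hsum.sum_add_tsum_nat_add N, ← hA]
    ring
  have htail_pos : 0 < ∑' i, f (i + N) :=
    ((summable_nat_add_iff N).2 hsum).tsum_pos (fun i => h0 _) 0 (by simpa [f] using hpos _)
  refine ⟨A, q, by exact_mod_cast hq, ?_, ?_⟩
  · push_cast
    intro h
    rw [h, sub_self] at htail
    exact htail_pos.ne htail
  · push_cast
    rw [htail, abs_of_pos htail_pos]
    calc _ ≤ 2 * f N := tsum_nat_add_le_two_mul_of_le_half h0 hhalf N
      _ < 1 / (q : ℝ) ^ m := by
        have : (0 : ℝ) < q := by exact_mod_cast (zero_lt_one.trans hq)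
        rw [← div_eq_mul_inv, div_lt_div_iff₀ (by simpa using hpos N) (by positivity), one_mul]
        exact_mod_cast hN

section PowerDenominators

variable {b h : ℕ → ℕ}

lemma prod_range_succ_pow_le (hb : Monotone b) (hb0 : 0 < b 0) (hh : Monotone h) (n : ℕ) :
    ∏ i ∈ range (n + 1), b i ^ h i ≤ b n ^ (h n * (n + 1)) := by
  calc ∏ i ∈ range (n + 1), b i ^ h i ≤ (b n ^ h n) ^ #(range (n + 1)) :=
        prod_le_pow_card _ _ _ fun i hi => by
          have hin : i ≤ n := Nat.lt_succ_iff.1 (mem_range.1 hi)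
          calc b i ^ h i ≤ b n ^ h i := Nat.pow_le_pow_left (hb hin) _
            _ ≤ b n ^ h n := Nat.pow_le_pow_right (hb0.trans_le (hb n.zero_le)) (hh hin)
    _ = b n ^ (h n * (n + 1)) := by rw [card_range, pow_mul]

lemma two_mul_pow_le_pow_succ (hb : Monotone b) (hb2 : ∀ i, 2 ≤ b i) (hh : StrictMono h)
    (i : ℕ) : 2 * b i ^ h i ≤ b (i + 1) ^ h (i + 1) :=
  calc 2 * b i ^ h i ≤ b i ^ (h i + 1) := by
        rw [pow_succ']; exact Nat.mul_le_mul_right _ (hb2 i)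
    _ ≤ b (i + 1) ^ (h i + 1) := Nat.pow_le_pow_left (hb i.le_succ) _
    _ ≤ b (i + 1) ^ h (i + 1) :=
        Nat.pow_le_pow_right (by linarith [hb2 (i + 1)]) (hh i.lt_succ_self)

theorem liouville_tsum_inv_pow (hb : Monotone b) (hb2 : ∀ i, 2 ≤ b i) (hh : StrictMono h)
    (hgrow : ∀ n, b n ^ (2 * (n + 2) * (h n + 1) ^ 3) < h (n + 1)) :
    Liouville (∑' i, ((b i ^ h i : ℕ) : ℝ)⁻¹) := by
  have hpos : ∀ i, 0 < b i ^ h i := fun i => pow_pos (by linarith [hb2 i]) _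
  have hh_succ : ∀ k, h (k + 1) ≠ 0 := fun k => ((Nat.zero_le _).trans_lt (hh k.succ_pos)).ne'
  refine liouville_tsum_inv_of_two_mul_le _ hpos (two_mul_pow_le_pow_succ hb hb2 hh)
    fun m => ⟨m + 2, ?_, ?_⟩
  · calc 1 < b (m + 1) ^ h (m + 1) := Nat.one_lt_pow (hh_succ m) (hb2 _)
      _ ≤ ∏ i ∈ range (m + 2), b i ^ h i :=
        single_le_prod' (f := fun i => b i ^ h i) (fun i _ => hpos i)
          (mem_range.2 (m + 1).lt_succ_self)
  set n := m + 1
  set q := ∏ i ∈ range (n + 1), b i ^ h i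
  have hexp : h n * (n + 1) * m ≤ 2 * (n + 2) * (h n + 1) ^ 3 := by
    have : m ≤ h n := m.le_succ.trans (hh.id_le n)
    calc h n * (n + 1) * m ≤ (h n + 1) * (n + 2) * (h n + 1) := by gcongr <;> omega
      _ = 1 * (n + 2) * ((h n + 1) ^ 2 * 1) := by ring
      _ ≤ 2 * (n + 2) * ((h n + 1) ^ 2 * (h n + 1)) := by gcongr <;> omega
      _ = 2 * (n + 2) * (h n + 1) ^ 3 := by ring
  have hqm : q ^ m < h (n + 1) :=
    calc q ^ m ≤ (b n ^ (h n * (n + 1))) ^ m :=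
          Nat.pow_le_pow_left (prod_range_succ_pow_le hb (by linarith [hb2 0]) hh.monotone n) m
      _ = b n ^ (h n * (n + 1) * m) := (pow_mul _ _ _).symm
      _ ≤ b n ^ (2 * (n + 2) * (h n + 1) ^ 3) := Nat.pow_le_pow_right (by linarith [hb2 n]) hexp
      _ < h (n + 1) := hgrow n
  obtain ⟨j, hj⟩ : ∃ j, h (n + 1) = j + 1 := Nat.exists_eq_succ_of_ne_zero (hh_succ n)
  calc 2 * q ^ m < 2 ^ h (n + 1) := by
        rw [hj, pow_succ]; have := j.lt_two_pow_self; omega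
    _ ≤ b (n + 1) ^ h (n + 1) := Nat.pow_le_pow_left (hb2 _) _

end PowerDenominators

theorem alpha_liouville_general
    (h : ℕ → ℕ) (hmono : StrictMono h)
    (hgrow : ∀ n, P n ^ (2 * (n + 2) * (h n + 1) ^ 3) < h (n + 1)) :
    Liouville (∑' i : ℕ, (P i : ℝ) ^ (-(h i : ℤ))) := by
  have hP : Monotone P := (Nat.nth_strictMono Nat.infinite_setOfPred_prime).monotone
  simpa [zpow_neg, zpow_natCast] using
    liouville_tsum_inv_pow hP (fun i => (Nat.prime_nth_prime i).two_le) hmono hgrow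

/-- `α = Σ_{i=0}^∞ P_i^(-h(i))` is a Liouville number. -/
theorem alpha_liouville
    (h : ℕ → ℕ) (hmono : StrictMono h) (hpos : ∀ i, 1 ≤ h i)
    (hgrow : ∀ n, P n ^ (2 * (n + 2) * (h n + 1) ^ 3) < h (n + 1)) :
    Liouville (∑' i : ℕ, (P i : ℝ) ^ (-(h i : ℤ))) :=
  alpha_liouville_general h hmono hgrow
end
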